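/- arXiv:2604.01455 — 3 statements merged into one kernel-verified Lean document; each statement's English description precedes it below -/
import Mathlib

section
/- Let H be a finite simple graph with maximum degree Δ, and let S be a nonempty subset of vertices of H such that the subgraph induced by S is connected, with |S| = s. Then the number of edges of H with exactly one endpoint in S is at most s(Δ - 2) + 2. -/
open scoped Classical

/-- A connected graph on `n` vertices has at least `n - 1` edges. -/
lemma conn_card_le_edges {W : Type*} [Fintype W] (G : SimpleGraph W)
    [Fintype G.edgeSet] (h : G.Connected) :
    Fintype.card W ≤ G.edgeFinset.card + 1 := by
  classical
  have hne : Nonempty W := h.nonempty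
  obtain ⟨r⟩ := hne
  -- every vertex other than the root has a neighbor strictly closer to the root
  have key : ∀ v : W, v ≠ r → ∃ w : W, G.Adj v w ∧ G.dist w r < G.dist v r := by
    intro v hv
    have hpos : 0 < G.dist v r := h.pos_dist_of_ne hv
    obtain ⟨p, hp⟩ := (h.exists_walk_length_eq_dist v r)
    cases p with
    | nil => simp at hp; simp at hpos
    | cons hadj q =>
        refine ⟨_, hadj, ?_⟩
        have h1 : G.dist _ r ≤ q.length := SimpleGraph.dist_le q
        simp [SimpleGraph.Walk.length_cons] at hp
        omega
  choose nbr hnbr1 hnbr2 using key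
  have hinj : Set.InjOn (fun v => if hv : v = r then (s(r, r)) else s(v, nbr v hv))
      ↑(Finset.univ.erase r) := by
    intro u hu v hv huv
    simp only [Finset.coe_erase, Set.mem_diff, Finset.mem_coe, Finset.mem_erase] at hu hv
    have hur : u ≠ r := by simpa using hu
    have hvr : v ≠ r := by simpa using hv
    simp only [dif_neg hur, dif_neg hvr, Sym2.eq_iff, Prod.mk.injEq, Prod.swap_prod_mk] at huv
    rcases huv with ⟨h1, h2⟩ | ⟨h1, h2⟩
    · exact h1
    · exfalso
      have d1 := hnbr2 u hur
      have d2 := hnbr2 v hvr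
      rw [h2] at d1
      rw [← h1] at d2
      omega
  have hmaps : ∀ v ∈ Finset.univ.erase r,
      (if hv : v = r then (s(r, r)) else s(v, nbr v hv)) ∈ G.edgeFinset := by
    intro v hv
    have hvr : v ≠ r := (Finset.mem_erase.mp hv).1
    rw [dif_neg hvr]
    simpa [SimpleGraph.mem_edgeFinset] using (hnbr1 v hvr)
  have := Finset.card_le_card_of_injOn
      (fun v => if hv : v = r then (s(r, r)) else s(v, nbr v hv)) hmaps hinj
  have hcard : (Finset.univ.erase r).card = Fintype.card W - 1 := by
    rw [Finset.card_erase_of_mem (Finset.mem_univ r), Finset.card_univ]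
  have hpos : 1 ≤ Fintype.card W := Fintype.card_pos_iff.mpr ⟨r⟩
  omega

/-- If `H` is a finite simple graph with maximum degree `Δ` and `S` is a
nonempty set of vertices inducing a connected subgraph, with `|S| = s`, then the number of
edges of `H` with exactly one endpoint in `S` is at most `s * (Δ - 2) + 2`. -/
theorem boundary_edge_count_le {V : Type*} [Fintype V] [DecidableEq V]
    (H : SimpleGraph V) [DecidableRel H.Adj] (Δ : ℕ) (hΔ : H.maxDegree = Δ)
    (S : Finset V) (hS : S.Nonempty) (hconn : (H.induce (↑S : Set V)).Connected)
    (s : ℕ) (hs : S.card = s) :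
    (H.edgeFinset.filter fun e => (∃ x ∈ e, x ∈ S) ∧ (∃ y ∈ e, y ∉ S)).card
      ≤ s * (Δ - 2) + 2 := by
  classical
  set G' := H.induce (↑S : Set V) with hG'
  -- Step 1: boundary count equals the sum of external degrees.
  have step1 : (H.edgeFinset.filter fun e => (∃ x ∈ e, x ∈ S) ∧ (∃ y ∈ e, y ∉ S)).card
      = ∑ v ∈ S, (H.neighborFinset v \ S).card := by
    rw [← Finset.card_sigma]
    symm
    apply Finset.card_bij (fun (p : Σ _ : V, V) _ => s(p.1, p.2))
    · rintro ⟨v, w⟩ hp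
      simp only [Finset.mem_sigma, Finset.mem_sdiff, SimpleGraph.mem_neighborFinset] at hp
      obtain ⟨hvS, hadj, hwS⟩ := hp
      simp only [Finset.mem_filter, SimpleGraph.mem_edgeFinset]
      refine ⟨hadj, ⟨v, ?_, hvS⟩, ⟨w, ?_, hwS⟩⟩ <;> simp
    · rintro ⟨v, w⟩ hp ⟨v', w'⟩ hp' heq
      simp only [Finset.mem_sigma, Finset.mem_sdiff, SimpleGraph.mem_neighborFinset] at hp hp'
      simp only [Sym2.eq_iff, Prod.mk.injEq, Prod.swap_prod_mk] at heq
      rcases heq with ⟨h1, h2⟩ | ⟨h1, h2⟩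
      · simp [h1, h2]
      · exact absurd (h1 ▸ hp.1 : w' ∈ S) hp'.2.2
    · intro e he
      simp only [Finset.mem_filter, SimpleGraph.mem_edgeFinset] at he
      obtain ⟨hadj, ⟨x, hxe, hxS⟩, ⟨y, hye, hyS⟩⟩ := he
      induction e with
      | _ a b =>
        rw [Sym2.mem_iff] at hxe hye
        have hab : H.Adj a b := hadj
        by_cases haS : a ∈ S
        · have hbS : b ∉ S := by
            rcases hye with rfl | rfl
            · exact absurd haS hyS
            · exact hyS
          exact ⟨⟨a, b⟩, by simp [Finset.mem_sigma, haS, hbS, hab], rfl⟩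
        · have hbS : b ∈ S := by
            rcases hxe with rfl | rfl
            · exact absurd hxS haS
            · exact hxS
          exact ⟨⟨b, a⟩, by simp [Finset.mem_sigma, haS, hbS, hab.symm], Sym2.eq_swap⟩
  -- Step 2: sum of internal degrees equals twice the number of internal edges.
  have hdeg : ∀ (x : (↑S : Set V)), G'.degree x = (H.neighborFinset ↑x ∩ S).card := by
    intro x
    rw [← SimpleGraph.card_neighborFinset_eq_degree]
    rw [← Finset.card_image_of_injective _ Subtype.val_injective]
    congr 1
    ext w
    simp only [Finset.mem_image, SimpleGraph.mem_neighborFinset, Finset.mem_inter]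
    constructor
    · rintro ⟨u, hu, rfl⟩
      exact ⟨hu, u.2⟩
    · rintro ⟨hadj, hwS⟩
      exact ⟨⟨w, hwS⟩, hadj, rfl⟩
  have step2 : ∑ v ∈ S, (H.neighborFinset v ∩ S).card = 2 * G'.edgeFinset.card := by
    rw [← SimpleGraph.sum_degrees_eq_twice_card_edges]
    rw [← Finset.sum_attach S (fun v => (H.neighborFinset v ∩ S).card)]
    apply Finset.sum_nbij' (fun x => (⟨x.1, x.2⟩ : (↑S : Set V)))
      (fun x => ⟨x.1, x.2⟩)
    all_goals intros <;> simp_all [hdeg]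
  -- Step 3: connectivity gives internal edges ≥ s - 1.
  have hcardS : Fintype.card (↑S : Set V) = s := by
    simp [hs]
  have step3 : s ≤ G'.edgeFinset.card + 1 := by
    have := conn_card_le_edges G' hconn
    rwa [hcardS] at this
  -- Step 4: sum of degrees is at most s * Δ.
  have step4 : ∑ v ∈ S, H.degree v ≤ s * Δ := by
    calc ∑ v ∈ S, H.degree v ≤ ∑ _v ∈ S, Δ := by
          apply Finset.sum_le_sum
          intro v _
          rw [← hΔ]
          exact H.degree_le_maxDegree v
      _ = s * Δ := by rw [Finset.sum_const, hs, smul_eq_mul]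
  -- Split degrees.
  have hsplit : ∀ v, (H.neighborFinset v ∩ S).card + (H.neighborFinset v \ S).card
      = H.degree v := by
    intro v
    rw [Finset.card_inter_add_card_sdiff, SimpleGraph.card_neighborFinset_eq_degree]
  have hsum : ∑ v ∈ S, (H.neighborFinset v ∩ S).card + ∑ v ∈ S, (H.neighborFinset v \ S).card
      = ∑ v ∈ S, H.degree v := by
    rw [← Finset.sum_add_distrib]
    exact Finset.sum_congr rfl fun v _ => hsplit v
  -- Put everything together.
  have keyineq : (H.edgeFinset.filter fun e => (∃ x ∈ e, x ∈ S) ∧ (∃ y ∈ e, y ∉ S)).card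
      + 2 * s ≤ s * Δ + 2 := by
    rw [step1]
    have h1 : ∑ v ∈ S, (H.neighborFinset v \ S).card
        = ∑ v ∈ S, H.degree v - 2 * G'.edgeFinset.card := by omega
    omega
  have hs1 : 1 ≤ s := by
    rw [← hs]
    exact Finset.card_pos.mpr hS
  rcases Nat.lt_or_ge Δ 2 with hΔ2 | hΔ2
  · have : Δ - 2 = 0 := by omega
    rw [this, Nat.mul_zero]
    have : s * Δ ≤ s * 1 := Nat.mul_le_mul_left s (by omega)
    omega
  · obtain ⟨d, rfl⟩ := Nat.exists_eq_add_of_le hΔ2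
    have h2 : s * (2 + d) = 2 * s + s * d := by ring
    have h3 : 2 + d - 2 = d := by omega
    rw [h3]
    omega
end

section
/- Suppose φ is a minor-embedding of a problem graph P into a hardware graph H (each vertex i of P mapped to a nonempty connected chain φ(i) ⊆ V(H), chains pairwise disjoint, every problem edge realized by a hardware edge between the corresponding chains). Then |E(P)| + Σ_{i ∈ V(P)} (|φ(i)| - 1) ≤ |E(H)|. -/
open scoped Classical

namespace SimpleGraph

variable {V : Type*}

lemma reachable_of_delete_nonbridge {G : SimpleGraph V} {u v : V}
    (hr : (G \ fromEdgeSet {s(u, v)}).Reachable u v) :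
    ∀ {a b : V}, G.Walk a b → (G \ fromEdgeSet {s(u, v)}).Reachable a b := by
  intro a b p
  induction p with
  | nil => exact Reachable.refl _
  | cons h p ih =>
    rename_i x y z
    refine Reachable.trans ?_ ih
    by_cases he : s(x, y) = s(u, v)
    · rw [Sym2.eq_iff] at he
      rcases he with ⟨rfl, rfl⟩ | ⟨rfl, rfl⟩
      · exact hr
      · exact hr.symm
    · exact Adj.reachable (by simp [h, he])

lemma card_le_card_edgeFinset_add_one [Fintype V] (G : SimpleGraph V)
    (hc : G.Connected) : Fintype.card V ≤ G.edgeFinset.card + 1 := by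
  generalize hn : G.edgeFinset.card = n
  induction n using Nat.strong_induction_on generalizing G with
  | _ n ih =>
    by_cases hac : G.IsAcyclic
    · have ht : G.IsTree := ⟨hc, hac⟩
      rw [← ht.card_edgeFinset]
      omega
    · rw [isAcyclic_iff_forall_adj_isBridge] at hac
      push_neg at hac
      obtain ⟨u, v, huv, hb⟩ := hac
      rw [isBridge_iff] at hb
      push_neg at hb
      have hr : (G \ fromEdgeSet {s(u, v)}).Reachable u v := hb
      set G' := G \ fromEdgeSet {s(u, v)} with hG'
      haveI : Nonempty V := hc.nonempty
      have hc' : G'.Connected :=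
        Connected.mk (fun a b => reachable_of_delete_nonbridge hr (hc.preconnected a b).some)
      have hsub : G'.edgeFinset ⊂ G.edgeFinset := by
        refine Finset.ssubset_iff_of_subset ?_ |>.mpr ?_
        · intro e he
          simp only [mem_edgeFinset] at he ⊢
          exact (edgeSet_mono (sdiff_le)) he
        · refine ⟨s(u, v), ?_, ?_⟩
          · simpa using huv
          · simp [hG', edgeSet_sdiff, edgeSet_fromEdgeSet]
      have hlt : G'.edgeFinset.card < n := hn ▸ Finset.card_lt_card hsub
      have := ih _ hlt G' hc' (by simp only [Set.toFinset_card, edgeFinset]; congr 1; exact Subsingleton.elim _ _)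
      omega

end SimpleGraph

open SimpleGraph Finset

/-- A minor-embedding of a problem graph `P` into a hardware graph `H`. -/
def IsMinorEmbedding {α β : Type*} (P : SimpleGraph α) (H : SimpleGraph β)
    (φ : α → Finset β) : Prop :=
  (∀ i, (φ i).Nonempty) ∧
  (∀ i, (H.induce (↑(φ i) : Set β)).Connected) ∧
  (∀ i k, i ≠ k → Disjoint (φ i) (φ k)) ∧
  (∀ i k, P.Adj i k → ∃ u ∈ φ i, ∃ v ∈ φ k, H.Adj u v)

/-- For any minor-embedding `φ` of `P` into `H`,
`|E(P)| + Σ_i (|φ(i)| - 1) ≤ |E(H)|`. -/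
theorem edge_count_bound_of_minorEmbedding {α β : Type*} [Fintype α] [Fintype β]
    [DecidableEq α] [DecidableEq β]
    (P : SimpleGraph α) (H : SimpleGraph β) [DecidableRel P.Adj] [DecidableRel H.Adj]
    (φ : α → Finset β) (hφ : IsMinorEmbedding P H φ) :
    P.edgeFinset.card + ∑ i, ((φ i).card - 1) ≤ H.edgeFinset.card := by
  obtain ⟨hne, hconn, hdisj, hedge⟩ := hφ
  have huniq : ∀ {x : β} {i j : α}, x ∈ φ i → x ∈ φ j → i = j := by
    intro x i j hxi hxj
    by_contra h
    exact Finset.disjoint_left.mp (hdisj i j h) hxi hxj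
  set A : α → Finset (Sym2 β) := fun i => H.edgeFinset.filter (fun e => ∀ v ∈ e, v ∈ φ i) with hA
  -- Step 1: per-chain internal edge count
  have hstep1 : ∀ i, (φ i).card ≤ (A i).card + 1 := by
    intro i
    have h1 := SimpleGraph.card_le_card_edgeFinset_add_one (H.induce (↑(φ i) : Set β)) (hconn i)
    have hcard : Fintype.card (↑(φ i) : Set β) = (φ i).card := by simp
    rw [hcard] at h1
    refine h1.trans (Nat.add_le_add_right ?_ 1)
    refine Finset.card_le_card_of_injOn (Sym2.map Subtype.val) ?_ ?_
    · intro e he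
      induction e using Sym2.ind with
      | _ a b =>
        have he : H.Adj a b := by simpa using he
        change Sym2.map Subtype.val s(a, b) ∈ A i
        simp only [hA, Sym2.map_pair_eq, mem_filter, mem_edgeFinset, mem_edgeSet]
        refine ⟨he, ?_⟩
        intro v hv
        rw [Sym2.mem_iff] at hv
        rcases hv with rfl | rfl
        · exact a.2
        · exact b.2
    · exact Set.injOn_of_injective (Sym2.map.injective Subtype.val_injective)
  -- Step 2: chains' internal edge sets are pairwise disjoint
  have hAdisj : ∀ i ∈ (Finset.univ : Finset α), ∀ j ∈ Finset.univ, i ≠ j →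
      Disjoint (A i) (A j) := by
    intro i _ j _ hij
    rw [Finset.disjoint_left]
    intro e hei hej
    induction e using Sym2.ind with
    | _ a b =>
      simp only [hA, mem_filter] at hei hej
      exact hij (huniq (hei.2 a (by simp)) (hej.2 a (by simp)))
  -- Step 3: witness edges for problem edges
  have hex : ∀ e ∈ P.edgeFinset, ∃ f : Sym2 β, f ∈ H.edgeFinset ∧
      ∃ i k, i ≠ k ∧ e = s(i, k) ∧ ∃ u ∈ φ i, ∃ v ∈ φ k, f = s(u, v) := by
    intro e he
    induction e using Sym2.ind with
    | _ i k =>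
      rw [mem_edgeFinset, mem_edgeSet] at he
      obtain ⟨u, hu, v, hv, huv⟩ := hedge i k he
      exact ⟨s(u, v), by simpa using huv, i, k, he.ne, rfl, u, hu, v, hv, rfl⟩
  choose w hwH hwP using hex
  set B : Finset (Sym2 β) := P.edgeFinset.attach.image (fun e => w e.1 e.2) with hB
  have hinj : ∀ (e1 : Sym2 α) (he1 : e1 ∈ P.edgeFinset) (e2 : Sym2 α)
      (he2 : e2 ∈ P.edgeFinset), w e1 he1 = w e2 he2 → e1 = e2 := by
    intro e1 he1 e2 he2 hw
    obtain ⟨i, k, hik, he1', u, hu, v, hv, hf1⟩ := hwP e1 he1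
    obtain ⟨i', k', hik', he2', u', hu', v', hv', hf2⟩ := hwP e2 he2
    rw [hf1, hf2, Sym2.eq_iff] at hw
    rcases hw with ⟨rfl, rfl⟩ | ⟨rfl, rfl⟩
    · rw [he1', he2', huniq hu hu', huniq hv hv']
    · rw [he1', he2', huniq hu hv', huniq hv hu', Sym2.eq_swap]
  have hBcard : B.card = P.edgeFinset.card := by
    rw [hB, Finset.card_image_of_injOn, Finset.card_attach]
    intro a _ b _ h
    exact Subtype.ext (hinj _ a.2 _ b.2 h)
  have hBdisj : Disjoint B (Finset.univ.biUnion A) := by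
    rw [Finset.disjoint_left]
    intro f hf hfA
    obtain ⟨e, _, rfl⟩ := Finset.mem_image.mp hf
    obtain ⟨i, k, hik, he', u, hu, v, hv, hf'⟩ := hwP e.1 e.2
    obtain ⟨j, _, hj⟩ := Finset.mem_biUnion.mp hfA
    simp only [hA, mem_filter] at hj
    have h1 : u ∈ φ j := hj.2 u (by rw [hf']; simp)
    have h2 : v ∈ φ j := hj.2 v (by rw [hf']; simp)
    exact hik ((huniq hu h1).trans (huniq hv h2).symm)
  -- Assembly
  have hsub : B ∪ Finset.univ.biUnion A ⊆ H.edgeFinset := by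
    intro f hf
    rcases Finset.mem_union.mp hf with hf | hf
    · obtain ⟨e, _, rfl⟩ := Finset.mem_image.mp hf
      exact hwH e.1 e.2
    · obtain ⟨j, _, hj⟩ := Finset.mem_biUnion.mp hf
      exact (Finset.mem_filter.mp hj).1
  calc P.edgeFinset.card + ∑ i, ((φ i).card - 1)
      ≤ B.card + ∑ i, (A i).card := by
        refine Nat.add_le_add (le_of_eq hBcard.symm) (Finset.sum_le_sum fun i _ => ?_)
        have := hstep1 i; omega
    _ = B.card + (Finset.univ.biUnion A).card := by
        rw [Finset.card_biUnion hAdisj]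
    _ = (B ∪ Finset.univ.biUnion A).card := by
        rw [Finset.card_union_of_disjoint hBdisj]
    _ ≤ H.edgeFinset.card := Finset.card_le_card hsub
end

section
/- Suppose φ is a minor-embedding of a problem graph P into a hardware graph H with maximum degree Δ_H, such that every chain has size at most L. Then for every vertex i of P, deg_P(i) ≤ L(Δ_H - 2) + 2. -/
open scoped Classical


lemma conn_card_le {V : Type*} [Fintype V] (G : SimpleGraph V) [Fintype G.edgeSet]
    (hc : G.Connected) : Fintype.card V ≤ G.edgeFinset.card + 1 := by
  have hne : Nonempty V := hc.nonempty
  obtain ⟨r⟩ := hne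
  have key : ∀ v, ∃ u, v ≠ r → G.Adj v u ∧ G.dist r u + 1 = G.dist r v := by
    intro v
    by_cases h : v = r
    · exact ⟨r, fun hv => absurd h hv⟩
    · have hd : 0 < G.dist r v := hc.pos_dist_of_ne (Ne.symm h)
      obtain ⟨p, hp⟩ := hc.exists_walk_length_eq_dist v r
      cases p with
      | nil => exact absurd rfl h
      | cons hadj q =>
        rename_i b
        refine ⟨b, fun _ => ⟨hadj, ?_⟩⟩
        have h1 : G.dist r b ≤ q.length := by
          rw [SimpleGraph.dist_comm]; exact SimpleGraph.dist_le q
        have h2 : q.length + 1 = G.dist v r := by simpa using hp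
        have h3 : G.dist r v = G.dist v r := SimpleGraph.dist_comm ..
        have h4 : G.dist r v ≤ G.dist r b + 1 := by
          have : G.dist b v = 1 := SimpleGraph.dist_eq_one_iff_adj.mpr hadj.symm
          calc G.dist r v ≤ G.dist r b + G.dist b v := hc.dist_triangle
            _ = G.dist r b + 1 := by rw [this]
        omega
  choose u hu using key
  have hcard : (Finset.univ.erase r).card + 1 = Fintype.card V := by
    rw [Finset.card_erase_of_mem (Finset.mem_univ r), Finset.card_univ]
    have : 1 ≤ Fintype.card V := @Fintype.card_pos V _ ⟨r⟩
    omega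
  have hle : (Finset.univ.erase r).card ≤ G.edgeFinset.card := by
    apply Finset.card_le_card_of_injOn (fun v => s(v, u v))
    · intro v hv
      have hvr : v ≠ r := Finset.ne_of_mem_erase hv
      exact SimpleGraph.mem_edgeFinset.mpr ((hu v hvr).1)
    · intro v hv w hw heq
      have hvr : v ≠ r := Finset.ne_of_mem_erase hv
      have hwr : w ≠ r := Finset.ne_of_mem_erase hw
      rw [Sym2.eq_iff] at heq
      rcases heq with ⟨h1, h2⟩ | ⟨h1, h2⟩
      · exact h1
      · exfalso
        have k1 := (hu v hvr).2
        have k2 := (hu w hwr).2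
        rw [h2] at k1
        rw [← h1] at k2
        omega
  omega

lemma induce_degree_eq {β : Type*} [Fintype β] [DecidableEq β] (H : SimpleGraph β)
    [DecidableRel H.Adj] (S : Finset β) (x : (↑S : Set β)) :
    (H.induce (↑S : Set β)).degree x = (H.neighborFinset ↑x ∩ S).card := by
  rw [← SimpleGraph.card_neighborFinset_eq_degree]
  refine Finset.card_bij (fun (y : (↑S : Set β)) _ => (↑y : β)) ?_ ?_ ?_
  · intro y hy
    rw [SimpleGraph.mem_neighborFinset] at hy
    simp only [SimpleGraph.comap_adj, Function.Embedding.coe_subtype] at hy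
    simp only [Finset.mem_inter, SimpleGraph.mem_neighborFinset]
    exact ⟨hy, y.2⟩
  · intro y _ z _ h
    exact Subtype.ext h
  · intro v hv
    simp only [Finset.mem_inter, SimpleGraph.mem_neighborFinset] at hv
    exact ⟨⟨v, hv.2⟩, by simpa [SimpleGraph.mem_neighborFinset] using hv.1, rfl⟩

/-- If `φ` is a minor-embedding of `P` into `H` whose maximum degree is `ΔH`,
with every chain of size at most `L`, then `deg_P(i) ≤ L * (ΔH - 2) + 2` for every vertex `i`
of `P`. -/
theorem degree_bound_of_minorEmbedding {α β : Type*} [Fintype α] [Fintype β]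
    [DecidableEq α] [DecidableEq β]
    (P : SimpleGraph α) (H : SimpleGraph β) [DecidableRel P.Adj] [DecidableRel H.Adj]
    (ΔH : ℕ) (hΔ : H.maxDegree = ΔH) (hΔ3 : 3 ≤ ΔH)
    (L : ℕ) (φ : α → Finset β) (hφ : IsMinorEmbedding P H φ)
    (hL : ∀ i, (φ i).card ≤ L) (i : α) :
    P.degree i ≤ L * (ΔH - 2) + 2 := by
  obtain ⟨hne, hconn, hdisj, hedge⟩ := hφ
  set S : Finset β := φ i with hS
  set G' := H.induce (↑S : Set β) with hG'
  set B : Finset (β × β) :=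
    S.biUnion (fun u => ((H.neighborFinset u) \ S).image (fun v => (u, v))) with hB
  -- Step A : degree ≤ B.card
  have hnb : Nonempty β := ⟨(hne i).choose⟩
  have key2 : ∀ k, ∃ uv : β × β, P.Adj i k →
      uv.1 ∈ S ∧ uv.2 ∈ φ k ∧ H.Adj uv.1 uv.2 := by
    intro k
    by_cases h : P.Adj i k
    · obtain ⟨u, hu, v, hv, huv⟩ := hedge i k h
      exact ⟨(u, v), fun _ => ⟨hu, hv, huv⟩⟩
    · exact ⟨(Classical.arbitrary β, Classical.arbitrary β), fun hk => absurd hk h⟩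
  choose g hg using key2
  have hstepA : P.degree i ≤ B.card := by
    rw [← SimpleGraph.card_neighborFinset_eq_degree]
    apply Finset.card_le_card_of_injOn g
    · intro k hk
      rw [Finset.mem_coe] at hk ⊢
      rw [SimpleGraph.mem_neighborFinset] at hk
      obtain ⟨h1, h2, h3⟩ := hg k hk
      have hik : i ≠ k := hk.ne
      have hv2 : (g k).2 ∉ S := fun hmem =>
        (Finset.disjoint_left.mp (hdisj i k hik) hmem) h2
      apply Finset.mem_biUnion.mpr
      exact ⟨(g k).1, h1, Finset.mem_image.mpr ⟨(g k).2,
        Finset.mem_sdiff.mpr ⟨(SimpleGraph.mem_neighborFinset _ _ _).mpr h3, hv2⟩, rfl⟩⟩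
    · intro k hk k' hk' heq
      have hk2 : P.Adj i k := by simpa using hk
      have hk2' : P.Adj i k' := by simpa using hk'
      by_contra hne'
      have h2 := (hg k hk2).2.1
      have h2' := (hg k' hk2').2.1
      rw [heq] at h2
      exact (Finset.disjoint_left.mp (hdisj k k' hne') h2) h2'
  -- Step B : B.card = sum of out-degrees
  have hstepB : B.card = ∑ u ∈ S, ((H.neighborFinset u) \ S).card := by
    rw [hB, Finset.card_biUnion]
    · apply Finset.sum_congr rfl
      intro u _
      apply Finset.card_image_of_injective
      intro a b hab
      exact (Prod.mk.injEq _ _ _ _ ▸ hab).2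
    · intro u _ u' _ huu'
      apply Finset.disjoint_left.mpr
      intro p hp hp'
      obtain ⟨v, _, rfl⟩ := Finset.mem_image.mp hp
      obtain ⟨v', _, h⟩ := Finset.mem_image.mp hp'
      exact huu' ((Prod.mk.injEq _ _ _ _ ▸ h.symm).1)
  -- handshake on induced graph
  have hcoe : ∑ x : (↑S : Set β), ((H.neighborFinset ↑x) ∩ S).card
      = ∑ u ∈ S, ((H.neighborFinset u) ∩ S).card := by
    have h1 : ∑ x : (↑S : Set β), ((H.neighborFinset ↑x) ∩ S).card
        = ∑ x : {x // x ∈ S}, ((H.neighborFinset ↑x) ∩ S).card :=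
      Fintype.sum_equiv (Equiv.subtypeEquivRight (fun x => by simp : ∀ x, x ∈ (↑S : Set β) ↔ x ∈ S))
        _ (fun x => ((H.neighborFinset ↑x) ∩ S).card) (fun x => rfl)
    exact h1.trans (Finset.sum_coe_sort S (fun u => ((H.neighborFinset u) ∩ S).card))
  have hhand : ∑ u ∈ S, ((H.neighborFinset u) ∩ S).card = 2 * G'.edgeFinset.card := by
    rw [← hcoe, ← SimpleGraph.sum_degrees_eq_twice_card_edges]
    apply Finset.sum_congr rfl
    intro x _
    exact (induce_degree_eq H S x).symm
  -- degree bound per vertex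
  have hdegbound : ∀ u ∈ S, ((H.neighborFinset u) \ S).card + ((H.neighborFinset u) ∩ S).card ≤ ΔH := by
    intro u _
    rw [Finset.card_sdiff_add_card_inter, SimpleGraph.card_neighborFinset_eq_degree, ← hΔ]
    exact H.degree_le_maxDegree u
  have hsum : B.card + 2 * G'.edgeFinset.card ≤ S.card * ΔH := by
    rw [hstepB, ← hhand, ← Finset.sum_add_distrib]
    calc ∑ u ∈ S, (((H.neighborFinset u) \ S).card + ((H.neighborFinset u) ∩ S).card)
        ≤ ∑ _u ∈ S, ΔH := Finset.sum_le_sum hdegbound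
      _ = S.card * ΔH := by rw [Finset.sum_const, smul_eq_mul]
  -- connectivity bound
  have hconnb : S.card ≤ G'.edgeFinset.card + 1 := by
    have := conn_card_le G' (hconn i)
    have hcs : Fintype.card (↑S : Set β) = S.card := by
      simp
    omega
  have hs1 : 1 ≤ S.card := Finset.card_pos.mpr (hne i)
  have hsL : S.card ≤ L := hL i
  have hmul : S.card * ΔH = S.card * (ΔH - 2) + 2 * S.card := by
    have : ΔH = (ΔH - 2) + 2 := by omega
    calc S.card * ΔH = S.card * ((ΔH - 2) + 2) := by rw [← this]
      _ = S.card * (ΔH - 2) + 2 * S.card := by ring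
  have hmono : S.card * (ΔH - 2) ≤ L * (ΔH - 2) :=
    Nat.mul_le_mul_right _ hsL
  omega
end
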